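/- Let 0 < ε ≤ 1 and m > 0 be fixed. Define G(ε,m,T) = (1/T)·ln((m²b⁴ + 2b² + m² + m(b² − 1)√C)/(2(1 + m²)b²)) − 2(m + ε), where b = e^{T√(1+m²)} and C = m²b⁴ + 2m²b² + 4b² + m² (so that G(ε,m,T) is the explicit expression for Δ(ε,m,T)). Then lim_{T→∞} G(ε,m,T) = 2(√(1+m²) − (m + ε)). In particular this limit is positive if and only if m < (1 − ε²)/(2ε). -/
import Mathlib

open Real Filter Set

/-- The explicit closed-form expression `G(ε,m,T)` for `Δ(ε,m,T)`. -/
noncomputable def Gval (ε m T : ℝ) : ℝ :=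
  let b := Real.exp (T * Real.sqrt (1 + m ^ 2))
  let C := m ^ 2 * b ^ 4 + 2 * m ^ 2 * b ^ 2 + 4 * b ^ 2 + m ^ 2
  (1 / T) * Real.log ((m ^ 2 * b ^ 4 + 2 * b ^ 2 + m ^ 2 +
    m * (b ^ 2 - 1) * Real.sqrt C) / (2 * (1 + m ^ 2) * b ^ 2)) - 2 * (m + ε)

noncomputable def gfun (m x : ℝ) : ℝ :=
  (m ^ 2 + 2 * x + m ^ 2 * x ^ 2 +
    m * (1 - x) * Real.sqrt (m ^ 2 + 2 * m ^ 2 * x + 4 * x + m ^ 2 * x ^ 2)) / (2 * (1 + m ^ 2))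

lemma gfun_pos (m x : ℝ) (hm : 0 < m) (hx0 : 0 ≤ x) (hx1 : x ≤ 1) : 0 < gfun m x := by
  unfold gfun
  have h1 : 0 ≤ Real.sqrt (m ^ 2 + 2 * m ^ 2 * x + 4 * x + m ^ 2 * x ^ 2) := Real.sqrt_nonneg _
  have h2 : 0 ≤ m * (1 - x) * Real.sqrt (m ^ 2 + 2 * m ^ 2 * x + 4 * x + m ^ 2 * x ^ 2) := by
    apply mul_nonneg (mul_nonneg hm.le (by linarith)) h1
  have h3 : 0 < 2 * (1 + m ^ 2) := by positivity
  apply div_pos _ h3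
  nlinarith

lemma key (ε m T : ℝ) (hm : 0 < m) (hT : 0 < T) :
    Gval ε m T = 2 * Real.sqrt (1 + m ^ 2) +
      (1 / T) * Real.log (gfun m (Real.exp (-(2 * Real.sqrt (1 + m ^ 2) * T)))) - 2 * (m + ε) := by
  set s := Real.sqrt (1 + m ^ 2) with hs
  set b := Real.exp (T * s) with hb
  set x := Real.exp (-(2 * s * T)) with hxdef
  have hbx : b ^ 2 * x = 1 := by
    rw [hb, hxdef, sq, ← Real.exp_add, ← Real.exp_add,
      show T * s + T * s + -(2 * s * T) = 0 by ring, Real.exp_zero]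
  have hbpos : 0 < b := Real.exp_pos _
  have hx0 : 0 < x := Real.exp_pos _
  have hx1 : x ≤ 1 := by
    rw [hxdef]
    apply Real.exp_le_one_iff.mpr
    have hs0 : 0 ≤ s := Real.sqrt_nonneg _
    nlinarith
  set w := Real.sqrt (m ^ 2 + 2 * m ^ 2 * x + 4 * x + m ^ 2 * x ^ 2) with hw
  have hC : Real.sqrt (m ^ 2 * b ^ 4 + 2 * m ^ 2 * b ^ 2 + 4 * b ^ 2 + m ^ 2)
      = b ^ 2 * w := by
    rw [show m ^ 2 * b ^ 4 + 2 * m ^ 2 * b ^ 2 + 4 * b ^ 2 + m ^ 2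
        = (b ^ 2) ^ 2 * (m ^ 2 + 2 * m ^ 2 * x + 4 * x + m ^ 2 * x ^ 2) by
      linear_combination (-(2 * m ^ 2 * b ^ 2) - 4 * b ^ 2 - m ^ 2 * (b ^ 2 * x + 1)) * hbx]
    rw [Real.sqrt_mul (sq_nonneg _), Real.sqrt_sq (sq_nonneg b), hw]
  have hwnn : 0 ≤ w := Real.sqrt_nonneg _
  have hgpos : 0 < gfun m x := gfun_pos m x hm hx0.le hx1
  have hnum : m ^ 2 * b ^ 4 + 2 * b ^ 2 + m ^ 2 + m * (b ^ 2 - 1) * (b ^ 2 * w)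
      = b ^ 4 * (m ^ 2 + 2 * x + m ^ 2 * x ^ 2 + m * (1 - x) * w) := by
    linear_combination (-(2 * b ^ 2) - m ^ 2 * (b ^ 2 * x + 1) + m * w * b ^ 2) * hbx
  have hfrac : (m ^ 2 * b ^ 4 + 2 * b ^ 2 + m ^ 2 + m * (b ^ 2 - 1) * (b ^ 2 * w))
      / (2 * (1 + m ^ 2) * b ^ 2) = b ^ 2 * gfun m x := by
    rw [hnum]
    unfold gfun
    rw [← hw]
    have h1 : (0:ℝ) < 1 + m ^ 2 := by positivity
    field_simp
  show (1 / T) * Real.log _ - 2 * (m + ε) = _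
  rw [hC, hfrac, Real.log_mul (by positivity) (ne_of_gt hgpos), Real.log_pow, hb,
    Real.log_exp]
  push_cast
  field_simp

theorem statement10 (ε m : ℝ) (hε : 0 < ε) (hε1 : ε ≤ 1) (hm : 0 < m) :
    Filter.Tendsto (fun T => Gval ε m T) Filter.atTop
      (nhds (2 * (Real.sqrt (1 + m ^ 2) - (m + ε)))) ∧
    (0 < 2 * (Real.sqrt (1 + m ^ 2) - (m + ε)) ↔ m < (1 - ε ^ 2) / (2 * ε)) := by
  set s := Real.sqrt (1 + m ^ 2) with hs
  have hspos : 0 < s := Real.sqrt_pos.mpr (by positivity)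
  constructor
  · -- limit
    have hxt : Tendsto (fun T : ℝ => Real.exp (-(2 * s * T))) atTop (nhds 0) := by
      apply Real.tendsto_exp_atBot.comp
      have h1 : Tendsto (fun T : ℝ => 2 * s * T) atTop atTop :=
        Tendsto.const_mul_atTop (by positivity) tendsto_id
      exact tendsto_neg_atBot_iff.mpr h1
    have hgc : ContinuousAt (fun x => gfun m x) 0 := by
      unfold gfun
      fun_prop (disch := positivity)
    have hg0 : 0 < gfun m 0 := gfun_pos m 0 hm le_rfl zero_le_one
    have hlog : Tendsto (fun T : ℝ => Real.log (gfun m (Real.exp (-(2 * s * T))))) atTop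
        (nhds (Real.log (gfun m 0))) :=
      ((Real.continuousAt_log (ne_of_gt hg0)).comp hgc).tendsto.comp hxt
    have hinv : Tendsto (fun T : ℝ => 1 / T) atTop (nhds 0) := by
      simpa [one_div] using tendsto_inv_atTop_zero
    have hmul : Tendsto (fun T : ℝ => (1 / T) * Real.log (gfun m (Real.exp (-(2 * s * T)))))
        atTop (nhds 0) := by
      simpa using hinv.mul hlog
    have hfin : Tendsto (fun T : ℝ => 2 * s +
        (1 / T) * Real.log (gfun m (Real.exp (-(2 * s * T)))) - 2 * (m + ε)) atTop
        (nhds (2 * (s - (m + ε)))) := by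
      have := (hmul.const_add (2 * s)).sub_const (2 * (m + ε))
      simpa [mul_sub] using this
    apply hfin.congr'
    filter_upwards [eventually_gt_atTop 0] with T hT
    exact (key ε m T hm hT).symm
  · constructor
    · intro h
      have h1 : m + ε < s := by linarith
      rw [hs] at h1
      have h2 := (Real.lt_sqrt (by linarith : (0:ℝ) ≤ m + ε)).mp h1
      rw [lt_div_iff₀ (by positivity)]
      nlinarith
    · intro h
      rw [lt_div_iff₀ (by positivity)] at h
      have h2 : (m + ε) ^ 2 < 1 + m ^ 2 := by nlinarith
      have h1 : m + ε < s := by rw [hs]; exact (Real.lt_sqrt (by linarith)).mpr h2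
      linarith
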